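/- arXiv:1501.00169 — 2 statements merged into one kernel-verified Lean document; each statement's English description precedes it below -/
import Mathlib

section
/- The map h : ℂ² → ℂ × ℝ, h(z,w) = (2·z·conj(w), |z|² − |w|²), maps the sphere of radius r centered at 0 in ℂ² onto the sphere of radius r² centered at 0 in ℂ × ℝ, for every r ≥ 0. -/
/-! The map squares norms: `‖hopfModel p‖ = ‖p‖²`, so the sphere of radius `r` is exactly the
preimage of the sphere of radius `r²`, and it remains to see that `hopfModel` is onto. With
`ρ = ‖(a, t)‖`, the point `(a, t)` is hit by `(s, conj a / (2s))` where `s² = (ρ + t) / 2`, unless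
`ρ + t = 0`; then `a = 0` and `(0, √ρ)` is a preimage. -/

/-- The quadratic model of the Hopf quotient map. -/
noncomputable def hopfModel (p : ℂ × ℂ) : ℂ × ℝ :=
  (2 * p.1 * (starRingEnd ℂ) p.2, ‖p.1‖ ^ 2 - ‖p.2‖ ^ 2)

open ComplexConjugate

theorem norm_sq_hopfModel_fst_add_sq_snd (p : ℂ × ℂ) :
    ‖(hopfModel p).1‖ ^ 2 + (hopfModel p).2 ^ 2 = (‖p.1‖ ^ 2 + ‖p.2‖ ^ 2) ^ 2 := by
  simp only [hopfModel, norm_mul, Complex.norm_conj, Complex.norm_two]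
  ring

theorem sqrt_norm_sq_hopfModel (p : ℂ × ℂ) :
    √(‖(hopfModel p).1‖ ^ 2 + (hopfModel p).2 ^ 2) = ‖p.1‖ ^ 2 + ‖p.2‖ ^ 2 := by
  rw [norm_sq_hopfModel_fst_add_sq_snd, Real.sqrt_sq (by positivity)]

theorem hopfModel_ofReal_conj_div {s : ℝ} (hs : s ≠ 0) (a : ℂ) :
    hopfModel (s, conj a / (2 * s)) = (a, s ^ 2 - ‖a‖ ^ 2 / (2 * s) ^ 2) := by
  have hs' : (s : ℂ) ≠ 0 := Complex.ofReal_ne_zero.mpr hs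
  simp only [hopfModel, map_div₀, map_mul, Complex.conj_conj, map_ofNat, Complex.conj_ofReal,
    norm_div, norm_mul, Complex.norm_conj, Complex.norm_two, Complex.norm_real, Real.norm_eq_abs,
    sq_abs, div_pow, mul_pow]
  congr 1
  field_simp

theorem hopfModel_surjective : Function.Surjective hopfModel := by
  rintro ⟨a, t⟩
  set ρ := √(‖a‖ ^ 2 + t ^ 2)
  have hρ : ρ ^ 2 = ‖a‖ ^ 2 + t ^ 2 := Real.sq_sqrt (by positivity)
  have ht : -t ≤ ρ := (neg_le_abs t).trans (Real.abs_le_sqrt (by nlinarith [norm_nonneg a]))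
  rcases ht.lt_or_eq with hlt | heq
  · set s := √((ρ + t) / 2)
    have hs : 0 < s := Real.sqrt_pos.mpr (by linarith)
    have hs2 : s ^ 2 = (ρ + t) / 2 := Real.sq_sqrt (by linarith)
    refine ⟨_, (hopfModel_ofReal_conj_div hs.ne' a).trans (Prod.ext rfl ?_)⟩
    have : ρ + t ≠ 0 := by linarith
    rw [mul_pow, hs2]
    field_simp
    linear_combination hρ
  · have ha : a = 0 := by
      rw [← norm_eq_zero, ← sq_eq_zero_iff]
      linear_combination -hρ + (t - ρ) * heq
    refine ⟨(0, (√ρ : ℂ)), Prod.ext (by simp [hopfModel, ha]) ?_⟩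
    simp only [hopfModel, norm_zero, Complex.norm_real, Real.norm_eq_abs, sq_abs]
    rw [Real.sq_sqrt (Real.sqrt_nonneg _)]
    linarith

/--  maps the sphere of radius  in  onto the sphere of radius 
in  (Euclidean norms), for every . -/
theorem hopfModel_image_sphere (r : ℝ) (hr : 0 ≤ r) :
    hopfModel '' {p : ℂ × ℂ |
        Real.sqrt (‖p.1‖ ^ 2 + ‖p.2‖ ^ 2) = r}
      = {q : ℂ × ℝ | Real.sqrt (‖q.1‖ ^ 2 + q.2 ^ 2) = r ^ 2} := by
  have hpre : {p : ℂ × ℂ | √(‖p.1‖ ^ 2 + ‖p.2‖ ^ 2) = r}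
      = hopfModel ⁻¹' {q | √(‖q.1‖ ^ 2 + q.2 ^ 2) = r ^ 2} := by
    ext p
    simp only [Set.mem_ofPred_eq, Set.mem_preimage, sqrt_norm_sq_hopfModel]
    exact Real.sqrt_eq_iff_eq_sq (by positivity) hr
  rw [hpre, Set.image_preimage_eq _ hopfModel_surjective]
end

section
/- For the map h : ℂ² → ℂ × ℝ, h(z,w) = (2·z·conj(w), |z|² − |w|²): if h(z₁,w₁) = h(z₂,w₂) and (z₁,w₁) ≠ (0,0), then there exists λ ∈ ℂ with |λ| = 1 such that (z₂,w₂) = (λ·z₁, λ·w₁). Hence each nonzero fiber of h is a single orbit of the Hopf circle action. -/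
open ComplexConjugate

lemma sq_norm_add_sq_norm_sq_eq_hopfModel (p : ℂ × ℂ) :
    (‖p.1‖ ^ 2 + ‖p.2‖ ^ 2) ^ 2 = ‖(hopfModel p).1‖ ^ 2 + (hopfModel p).2 ^ 2 := by
  simp only [hopfModel, norm_mul, Complex.norm_conj, Complex.norm_ofNat]
  ring

lemma norm_eq_of_hopfModel_eq {p q : ℂ × ℂ} (h : hopfModel p = hopfModel q) :
    ‖p.1‖ = ‖q.1‖ ∧ ‖p.2‖ = ‖q.2‖ := by
  have hsum : ‖p.1‖ ^ 2 + ‖p.2‖ ^ 2 = ‖q.1‖ ^ 2 + ‖q.2‖ ^ 2 := by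
    refine (pow_left_inj₀ (by positivity) (by positivity) two_ne_zero).mp ?_
    rw [sq_norm_add_sq_norm_sq_eq_hopfModel, sq_norm_add_sq_norm_sq_eq_hopfModel, h]
  have hdiff : ‖p.1‖ ^ 2 - ‖p.2‖ ^ 2 = ‖q.1‖ ^ 2 - ‖q.2‖ ^ 2 := congrArg Prod.snd h
  constructor <;>
  · refine (pow_left_inj₀ (norm_nonneg _) (norm_nonneg _) two_ne_zero).mp ?_
    linarith

/-- Here `c = λ a` defines `λ`; then `d ‖c‖² = c (b conj a) = λ b ‖a‖²` gives `d = λ b`. -/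
lemma exists_norm_eq_one_of_mul_conj_eq {a b c d : ℂ} (ha : a ≠ 0) (hac : ‖a‖ = ‖c‖)
    (h : b * conj a = d * conj c) : ∃ lam : ℂ, ‖lam‖ = 1 ∧ c = lam * a ∧ d = lam * b := by
  have hn : a * conj a = c * conj c := by
    rw [Complex.mul_conj', Complex.mul_conj', hac]
  have hna : a * conj a ≠ 0 := mul_ne_zero ha ((map_ne_zero _).mpr ha)
  refine ⟨c / a, ?_, (div_mul_cancel₀ c ha).symm, ?_⟩
  · rw [norm_div, ← hac, div_self (norm_ne_zero_iff.mpr ha)]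
  · refine mul_right_cancel₀ hna ?_
    calc d * (a * conj a) = c * (d * conj c) := by rw [hn]; ring
      _ = c / a * b * (a * conj a) := by rw [← h]; field_simp

/-- Each nonzero fiber of  is a single orbit of the Hopf circle action. -/
theorem hopfModel_fiber_orbit (z₁ w₁ z₂ w₂ : ℂ)
    (h : hopfModel (z₁, w₁) = hopfModel (z₂, w₂)) (hne : (z₁, w₁) ≠ (0, 0)) :
    ∃ lam : ℂ, ‖lam‖ = 1 ∧ (z₂, w₂) = (lam * z₁, lam * w₁) := by
  obtain ⟨hz, hw⟩ := norm_eq_of_hopfModel_eq h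
  have hprod : z₁ * conj w₁ = z₂ * conj w₂ := by
    simpa [hopfModel, mul_assoc] using congrArg Prod.fst h
  by_cases hw₁ : w₁ = 0
  · have hz₁ : z₁ ≠ 0 := fun hz₁ => hne (by rw [hz₁, hw₁])
    have hprod' : w₁ * conj z₁ = w₂ * conj z₂ := by
      simpa [mul_comm] using congrArg conj hprod
    obtain ⟨lam, hlam, rfl, rfl⟩ := exists_norm_eq_one_of_mul_conj_eq hz₁ hz hprod'
    exact ⟨lam, hlam, rfl⟩
  · obtain ⟨lam, hlam, rfl, rfl⟩ := exists_norm_eq_one_of_mul_conj_eq hw₁ hw hprod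
    exact ⟨lam, hlam, rfl⟩
end
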